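/- Let H be a real Hilbert space, ℒ : H × H → ℝ a bounded bilinear form, p > 0, and suppose ℒ_p(w,v) := ℒ(w,v) + p⟨Jw, Jv⟩ is bounded and coercive on H, where J : H → L²(Θ) is a bounded linear map. Suppose further J is compact, ℒ_p induces an invertible operator X_p (by Lax–Milgram), and the only u ∈ H with ℒ(u,v) = 0 for all v ∈ H is u = 0. Then for every bounded linear functional ℱ on H there exists a unique u ∈ H with ℒ(u,v) = ℱ(v) for all v ∈ H. -/

import Mathlib

/-! Let `A` be the operator of `L` and `Q u := p ⟪J u, J ·⟫`, a compact operator `H → H'` because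
`J` is compact. The Lax–Milgram hypothesis makes `T := A + Q` bijective, hence an
isomorphism by the open mapping theorem, so `A = T (1 - K)` with `K := T⁻¹ Q`
compact. Since `A` is injective so is `1 - K`, and the Fredholm alternative makes `1 - K`, hence
`A`, surjective. -/

namespace IsCompactOperator

variable {𝕜 X Y : Type*} [NontriviallyNormedField 𝕜]
  [NormedAddCommGroup X] [NormedSpace 𝕜 X] [CompleteSpace X]

theorem surjective_one_sub_of_injective {K : X →L[𝕜] X} (hK : IsCompactOperator K)
    (hinj : Function.Injective ⇑(1 - K)) : Function.Surjective ⇑(1 - K) := by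
  rcases hK.hasEigenvalue_or_mem_resolventSet one_ne_zero with h | h
  · obtain ⟨x, hx⟩ := h.exists_hasEigenvector
    refine absurd (hinj ?_) hx.right
    simpa [sub_eq_zero] using hx.apply_eq_smul.symm
  · rw [spectrum.mem_resolventSet_iff, ContinuousLinearMap.isUnit_iff_bijective] at h
    simpa using h.surjective

variable [NormedAddCommGroup Y] [NormedSpace 𝕜 Y] [CompleteSpace Y]

theorem surjective_of_bijective_add {A Q : X →L[𝕜] Y} (hQ : IsCompactOperator Q)
    (hAQ : Function.Bijective ⇑(A + Q)) (hA : Function.Injective A) :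
    Function.Surjective A := by
  let T := ContinuousLinearEquiv.ofBijective (A + Q) (LinearMap.ker_eq_bot.mpr hAQ.1)
    (LinearMap.range_eq_top.mpr hAQ.2)
  let K : X →L[𝕜] X := T.symm.toContinuousLinearMap ∘L Q
  have hK : IsCompactOperator K := hQ.clm_comp (T.symm : Y →L[𝕜] X)
  have hAK : ⇑A = T ∘ ⇑(1 - K) := by
    ext x
    change A x = T (x - T.symm (Q x))
    rw [map_sub, T.apply_symm_apply, ContinuousLinearEquiv.coeFn_ofBijective, add_apply,
      add_sub_cancel_right]
  rw [hAK] at hA ⊢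
  exact T.surjective.comp (hK.surjective_one_sub_of_injective hA.of_comp)

end IsCompactOperator

theorem abstract_existence_fredholm_general {H E : Type*}
    [NormedAddCommGroup H] [InnerProductSpace ℝ H] [CompleteSpace H]
    [NormedAddCommGroup E] [InnerProductSpace ℝ E]
    (L : H → H → ℝ)
    (hadd₁ : ∀ a b v : H, L (a + b) v = L a v + L b v)
    (hsmul₁ : ∀ (c : ℝ) (a v : H), L (c • a) v = c * L a v)
    (hadd₂ : ∀ a u v : H, L a (u + v) = L a u + L a v)
    (hsmul₂ : ∀ (c : ℝ) (a v : H), L a (c • v) = c * L a v)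
    (Cb : ℝ) (hbound : ∀ u v : H, |L u v| ≤ Cb * ‖u‖ * ‖v‖)
    (p : ℝ)
    (J : H →L[ℝ] E) (hJ : IsCompactOperator J)
    (c : ℝ)
    (hLaxMilgram : ∀ F : H →L[ℝ] ℝ, ∃! y : H,
      ∀ v : H, L y v + p * (inner ℝ (J y) (J v) : ℝ) = F v)
    (huniq : ∀ u : H, (∀ v : H, L u v = 0) → u = 0) :
    ∀ F : H →L[ℝ] ℝ, ∃! u : H, ∀ v : H, L u v = F v := by
  let A : H →L[ℝ] H →L[ℝ] ℝ :=
    (LinearMap.mk₂ ℝ L hadd₁ hsmul₁ hadd₂ hsmul₂).mkContinuous₂ Cb hbound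
  let G : E →L[ℝ] H →L[ℝ] ℝ := p • (ContinuousLinearMap.compL ℝ H E ℝ).flip J ∘L innerSL ℝ
  let Q : H →L[ℝ] H →L[ℝ] ℝ := G ∘L J
  have hA_apply (u v : H) : A u v = L u v := rfl
  have hQ_apply (u v : H) : Q u v = p * inner ℝ (J u) (J v) := rfl
  have hQ : IsCompactOperator Q := hJ.clm_comp G
  have hAQ : Function.Bijective ⇑(A + Q) := by
    refine (Function.bijective_iff_existsUnique _).2 fun F => ?_
    simpa only [ContinuousLinearMap.ext_iff, add_apply, hA_apply, hQ_apply] using hLaxMilgram F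
  have hA : Function.Injective A := (injective_iff_map_eq_zero A).2 fun u hu =>
    huniq u fun v => by rw [← hA_apply, hu, zero_apply]
  intro F
  simpa only [ContinuousLinearMap.ext_iff, hA_apply] using
    (Function.bijective_iff_existsUnique A).1 ⟨hA, hQ.surjective_of_bijective_add hAQ hA⟩ F

/-- Abstract existence via Lax–Milgram for the shifted form, compactness of the zero-order
perturbation, and the Fredholm alternative: for every bounded linear functional `F` there is a
unique `u` with `L u v = F v` for all `v`. -/
theorem abstract_existence_fredholm {H E : Type*}
    [NormedAddCommGroup H] [InnerProductSpace ℝ H] [CompleteSpace H]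
    [NormedAddCommGroup E] [InnerProductSpace ℝ E] [CompleteSpace E]
    (L : H → H → ℝ)
    (hadd₁ : ∀ a b v : H, L (a + b) v = L a v + L b v)
    (hsmul₁ : ∀ (c : ℝ) (a v : H), L (c • a) v = c * L a v)
    (hadd₂ : ∀ a u v : H, L a (u + v) = L a u + L a v)
    (hsmul₂ : ∀ (c : ℝ) (a v : H), L a (c • v) = c * L a v)
    (Cb : ℝ) (hbound : ∀ u v : H, |L u v| ≤ Cb * ‖u‖ * ‖v‖)
    (p : ℝ) (hp : 0 < p)
    (J : H →L[ℝ] E) (hJ : IsCompactOperator J)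
    (c : ℝ) (hc : 0 < c)
    (hcoer : ∀ u : H, c * ‖u‖ ^ 2 ≤ L u u + p * (inner ℝ (J u) (J u) : ℝ))
    (hLaxMilgram : ∀ F : H →L[ℝ] ℝ, ∃! y : H,
      ∀ v : H, L y v + p * (inner ℝ (J y) (J v) : ℝ) = F v)
    (huniq : ∀ u : H, (∀ v : H, L u v = 0) → u = 0) :
    ∀ F : H →L[ℝ] ℝ, ∃! u : H, ∀ v : H, L u v = F v :=
  abstract_existence_fredholm_general L hadd₁ hsmul₁ hadd₂ hsmul₂ Cb hbound p J hJ c hLaxMilgram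
    huniq
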